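/- arXiv:1803.06825 — 3 statements merged into one kernel-verified Lean document; each statement's English description precedes it below -/
import Mathlib

section
/- Let n be even and let σ be the permutation of {1,…,n} with σ(2j−1)=2j and σ(2j)=2j−1 for all j. Then for every k ∈ {0,…,n}, the sign vector v_k : Fin n → {−1,1} defined by v_k(i) = 1 if σ(i+1) > k and −1 otherwise has at most 3 sign changes. (Hence S2(n) ⊆ S1(n): every tope of the rank-2 oriented matroid M2 is a tope of the rank-4 alternating oriented matroid M1, so by the tope criterion for strong maps there is a strong map f : M1 → M2.) -/
/-- The number of sign changes of `v`. -/
def signChanges {n : ℕ} (v : Fin n → ℤ) : ℕ :=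
  (Finset.univ.filter
    (fun i : Fin (n - 1) =>
      v ⟨i.val, by omega⟩ ≠ v ⟨i.val + 1, by omega⟩)).card

/-- The permutation σ of `{1,…,n}` (on values) swapping `2j-1` and `2j`. -/
def pairSwap (m : ℕ) : ℕ := if m % 2 = 1 then m + 1 else m - 1

/-- The tope `v_k` of the rank-2 oriented matroid `M₂`. -/
def vk (n k : ℕ) : Fin n → ℤ := fun i => if k < pairSwap (i.val + 1) then 1 else -1

/-! Since `σ` moves every value by at most one, `v_k` is `-1` on the positions `i ≤ k - 2` and
`1` on the positions `i ≥ k + 1`, so it can change sign only at the three positions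
`k - 2, k - 1, k`. -/

lemma signChanges_le_card {n : ℕ} (v : Fin n → ℤ) (s : Finset ℕ)
    (hs : ∀ i (hi : i + 1 < n), v ⟨i, by omega⟩ ≠ v ⟨i + 1, hi⟩ → i ∈ s) :
    signChanges v ≤ s.card :=
  Finset.card_le_card_of_injOn Fin.val
    (fun i hi => hs i.val (by omega) (Finset.mem_filter.mp hi).2)
    Fin.val_injective.injOn

lemma sub_one_le_pairSwap (m : ℕ) : m - 1 ≤ pairSwap m := by
  unfold pairSwap; split <;> omega

lemma pairSwap_le_add_one (m : ℕ) : pairSwap m ≤ m + 1 := by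
  unfold pairSwap; split <;> omega

lemma vk_of_lt {n k : ℕ} (i : Fin n) (h : k < i.val) : vk n k i = 1 :=
  if_pos ((by omega : k < i.val + 1 - 1).trans_le (sub_one_le_pairSwap _))

lemma vk_of_add_two_le {n k : ℕ} (i : Fin n) (h : i.val + 2 ≤ k) : vk n k i = -1 :=
  if_neg (not_lt.mpr ((pairSwap_le_add_one _).trans h))

lemma vk_succ_eq_of_notMem_Icc {n k i : ℕ} (hi : i + 1 < n) (hk : i ∉ Finset.Icc (k - 2) k) :
    vk n k ⟨i, by omega⟩ = vk n k ⟨i + 1, hi⟩ := by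
  rw [Finset.mem_Icc] at hk
  rcases (by omega : k < i ∨ i + 3 ≤ k) with h | h
  · rw [vk_of_lt _ h, vk_of_lt _ (by simp only; omega)]
  · rw [vk_of_add_two_le _ (by simp only; omega), vk_of_add_two_le _ (by simp only; omega)]

theorem vk_signChanges_le_three_general (n : ℕ) (k : ℕ) :
    signChanges (vk n k) ≤ 3 :=
  calc signChanges (vk n k)
      ≤ (Finset.Icc (k - 2) k).card :=
        signChanges_le_card _ _ fun _ hi hne =>
          by_contra fun hk => hne (vk_succ_eq_of_notMem_Icc hi hk)
    _ ≤ 3 := by rw [Nat.card_Icc]; omega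

/-- Every tope `v_k` of the rank-2 oriented matroid `M₂` has at most 3 sign
changes, hence is a tope of the rank-4 alternating oriented matroid `M₁`. -/
theorem vk_signChanges_le_three (n : ℕ) (hn : Even n) (k : ℕ) (hk : k ≤ n) :
    signChanges (vk n k) ≤ 3 :=
  vk_signChanges_le_three_general n k
end

section
/- Let E be a finite set and let L ⊆ (E → SignType) satisfy the covector axioms. Let X : E → SignType be a sign vector such that every full-support sign vector X′ with X ⪯ X′ belongs to L. Then X ∈ L. -/
/-- Composition of sign vectors: `(X ∘ Y)(e) = X(e)` if `X(e) ≠ 0`, else `Y(e)`. -/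
def scompose {E : Type*} (X Y : E → SignType) : E → SignType :=
  fun e => if X e ≠ 0 then X e else Y e

/-- The separation set of two sign vectors. -/
def sep {E : Type*} (X Y : E → SignType) : Set E :=
  {f | X f = -Y f ∧ X f ≠ 0}

/-- The covector axioms for a set of sign vectors. -/
def IsCovectorSet {E : Type*} (L : Set (E → SignType)) : Prop :=
  (0 ∈ L) ∧
  (∀ X ∈ L, -X ∈ L) ∧
  (∀ X ∈ L, ∀ Y ∈ L, scompose X Y ∈ L) ∧
  (∀ X ∈ L, ∀ Y ∈ L, ∀ e ∈ sep X Y,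
    ∃ Z ∈ L, Z e = 0 ∧ ∀ f ∉ sep X Y, Z f = scompose X Y f)

/-- The conformal partial order on sign vectors: `X ⪯ X'`. -/
def sle {E : Type*} (X X' : E → SignType) : Prop :=
  ∀ e, X e = 0 ∨ X e = X' e

/-- If every full-support sign vector above `X` is a covector, then `X` is a
covector. -/
theorem mem_of_all_above_full_support {E : Type*} [Fintype E]
    (L : Set (E → SignType)) (hL : IsCovectorSet L) (X : E → SignType)
    (h : ∀ X' : E → SignType, sle X X' → (∀ e, X' e ≠ 0) → X' ∈ L) :
    X ∈ L := by
  classical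
  obtain ⟨n, hn⟩ : ∃ n, (Finset.univ.filter (fun e => X e = 0)).card = n := ⟨_, rfl⟩
  induction n using Nat.strong_induction_on generalizing X with
  | _ n IH =>
    by_cases hfull : ∀ e, X e ≠ 0
    · exact h X (fun e => Or.inr rfl) hfull
    · push_neg at hfull
      obtain ⟨e, he⟩ := hfull
      set Yp := Function.update X e 1 with hYp
      set Ym := Function.update X e (-1) with hYm
      have hle : ∀ s : SignType, sle X (Function.update X e s) := by
        intro s f
        by_cases hf : f = e
        · subst hf; exact Or.inl he
        · right; simp [Function.update_of_ne hf]
      have htrans : ∀ s (X' : E → SignType), sle (Function.update X e s) X' →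
          sle X X' := by
        intro s X' h2 f
        rcases hle s f with h0 | heq
        · exact Or.inl h0
        · rcases h2 f with h0 | heq2
          · exact Or.inl (heq.trans h0)
          · exact Or.inr (heq.trans heq2)
      have hcard : ∀ s : SignType, s ≠ 0 →
          (Finset.univ.filter (fun f => Function.update X e s f = 0)).card < n := by
        intro s hs
        rw [← hn]
        apply Finset.card_lt_card
        constructor
        · intro f hf
          simp only [Finset.mem_filter, Finset.mem_univ, true_and] at hf ⊢
          by_cases hfe : f = e
          · subst hfe; exact he
          · rwa [Function.update_of_ne hfe] at hf
        · intro hsub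
          have := hsub (by simp [he] : e ∈ Finset.univ.filter (fun f => X f = 0))
          simp only [Finset.mem_filter, Finset.mem_univ, true_and,
            Function.update_self] at this
          exact hs this
      have hmem : ∀ s : SignType, s ≠ 0 → Function.update X e s ∈ L := by
        intro s hs
        exact IH _ (hcard s hs) _ (fun X' h1 h2 => h X' (htrans s X' h1) h2) rfl
      have hYpL : Yp ∈ L := hmem 1 (by decide)
      have hYmL : Ym ∈ L := hmem (-1) (by decide)
      have hsep : sep Yp Ym = {e} := by
        ext f
        simp only [sep, Set.mem_setOf_eq, Set.mem_singleton_iff]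
        by_cases hf : f = e
        · subst hf
          simp [hYp, hYm]
        · simp only [hYp, hYm, Function.update_of_ne hf, hf, iff_false]
          rintro ⟨h1, h2⟩
          have : X f = 0 := by
            rcases hx : X f with _ | _ | _ <;> rw [hx] at h1 <;>
              first | rfl | exact absurd h1 (by decide)
          exact h2 this
      have hesep : e ∈ sep Yp Ym := by rw [hsep]; rfl
      obtain ⟨Z, hZL, hZe, hZf⟩ := hL.2.2.2 Yp hYpL Ym hYmL e hesep
      have : Z = X := by
        funext f
        by_cases hf : f = e
        · subst hf; rw [hZe, he]
        · have hfs : f ∉ sep Yp Ym := by rw [hsep]; exact hf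
          rw [hZf f hfs]
          simp only [scompose, hYp, hYm, Function.update_of_ne hf]
          split <;> rfl
      rwa [this] at hZL
end

section
/- Let E be a finite set and let L₁, L₂ ⊆ (E → SignType) both satisfy the covector axioms. Suppose L₂ is up-closed above nonzero elements, i.e., for every nonzero X ∈ L₂ and every sign vector X′ with X ⪯ X′ one has X′ ∈ L₂ (this is the property of the covector set of a uniform oriented matroid used in the paper). If every full-support element of L₂ belongs to L₁, then L₂ ⊆ L₁. (This is the paper's Proposition: if M₂ is uniform and every tope of M₂ is a tope of M₁, then every covector of M₂ is a covector of M₁, i.e., there is a strong map M₁ → M₂.) -/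
/-- The tope criterion for strong maps: if `L₂` is up-closed above nonzero
covectors (as for a uniform oriented matroid) and every full-support element
of `L₂` lies in `L₁`, then `L₂ ⊆ L₁`. -/
theorem strong_map_of_topes {E : Type*} [Fintype E]
    (L₁ L₂ : Set (E → SignType))
    (hL₁ : IsCovectorSet L₁) (hL₂ : IsCovectorSet L₂)
    (hup : ∀ X ∈ L₂, X ≠ 0 → ∀ X' : E → SignType, sle X X' → X' ∈ L₂)
    (htopes : ∀ X ∈ L₂, (∀ e, X e ≠ 0) → X ∈ L₁) :
    L₂ ⊆ L₁ := by
  classical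
  -- key lemma: induction on the number of zero coordinates
  have key : ∀ n : ℕ, ∀ X ∈ L₂,
      (Finset.univ.filter (fun e => X e = 0)).card ≤ n → X ∈ L₁ := by
    intro n
    induction n with
    | zero =>
      intro X hX hcard
      refine htopes X hX ?_
      intro e he
      have : e ∈ Finset.univ.filter (fun e => X e = 0) := by
        simp [he]
      have := Finset.card_pos.mpr ⟨e, this⟩
      omega
    | succ n ih =>
      intro X hX hcard
      by_cases hfull : ∀ e, X e ≠ 0
      · exact htopes X hX hfull
      · push_neg at hfull
        obtain ⟨e, he⟩ := hfull
        by_cases h0 : X = 0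
        · subst h0; exact hL₁.1
        · set Xp : E → SignType := Function.update X e 1 with hXp
          set Xm : E → SignType := Function.update X e (-1) with hXm
          have hslep : sle X Xp := by
            intro f
            by_cases hfe : f = e
            · subst hfe; left; exact he
            · right; simp [hXp, Function.update_of_ne hfe]
          have hslem : sle X Xm := by
            intro f
            by_cases hfe : f = e
            · subst hfe; left; exact he
            · right; simp [hXm, Function.update_of_ne hfe]
          have hpL2 : Xp ∈ L₂ := hup X hX h0 Xp hslep
          have hmL2 : Xm ∈ L₂ := hup X hX h0 Xm hslem
          have hcardp : (Finset.univ.filter (fun f => Xp f = 0)).card ≤ n := by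
            have hsub : Finset.univ.filter (fun f => Xp f = 0) ⊆
                (Finset.univ.filter (fun f => X f = 0)).erase e := by
              intro f hf
              simp only [Finset.mem_filter, Finset.mem_univ, true_and] at hf
              have hfe : f ≠ e := by
                intro h; subst h; simp [hXp] at hf
              rw [hXp, Function.update_of_ne hfe] at hf
              simp [Finset.mem_erase, hfe, hf]
            have := Finset.card_le_card hsub
            have hmem : e ∈ Finset.univ.filter (fun f => X f = 0) := by simp [he]
            have := Finset.card_erase_of_mem hmem
            omega
          have hcardm : (Finset.univ.filter (fun f => Xm f = 0)).card ≤ n := by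
            have hsub : Finset.univ.filter (fun f => Xm f = 0) ⊆
                (Finset.univ.filter (fun f => X f = 0)).erase e := by
              intro f hf
              simp only [Finset.mem_filter, Finset.mem_univ, true_and] at hf
              have hfe : f ≠ e := by
                intro h; subst h; simp [hXm] at hf
              rw [hXm, Function.update_of_ne hfe] at hf
              simp [Finset.mem_erase, hfe, hf]
            have := Finset.card_le_card hsub
            have hmem : e ∈ Finset.univ.filter (fun f => X f = 0) := by simp [he]
            have := Finset.card_erase_of_mem hmem
            omega
          have hpL1 : Xp ∈ L₁ := ih Xp hpL2 hcardp
          have hmL1 : Xm ∈ L₁ := ih Xm hmL2 hcardm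
          -- sep Xp Xm = {e}
          have hsep : sep Xp Xm = {e} := by
            ext f
            simp only [sep, Set.mem_setOf_eq, Set.mem_singleton_iff]
            constructor
            · rintro ⟨h1, h2⟩
              by_contra hfe
              rw [hXp, Function.update_of_ne hfe] at h1 h2
              rw [hXm, Function.update_of_ne hfe] at h1
              rcases (X f) with _ | _ | _ <;> simp_all
            · rintro rfl
              simp [hXp, hXm]
          have heins : e ∈ sep Xp Xm := by rw [hsep]; rfl
          obtain ⟨Z, hZL, hZe, hZf⟩ := hL₁.2.2.2 Xp hpL1 Xm hmL1 e heins
          have hZX : Z = X := by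
            funext f
            by_cases hfe : f = e
            · subst hfe; rw [hZe, he]
            · have hf : f ∉ sep Xp Xm := by rw [hsep]; exact hfe
              rw [hZf f hf, scompose]
              simp only [hXp, hXm, Function.update_of_ne hfe]
              split <;> rfl
          rw [← hZX]; exact hZL
  intro X hX
  exact key (Finset.univ.filter (fun e => X e = 0)).card X hX le_rfl
end
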